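/- For d = 2j+1 prime and α, β ∈ {0,...,d-1}, a ≠ b modulo d, the normalized Gauss sum overlap has modulus |⟨jα;ra | jβ;rb⟩| = 1/√d; equivalently, |S(a-b, -(a-b)d - 2(α-β), d)| = √d for the generalized quadratic Gauss sum S. -/

import Mathlib

open Complex Finset

/-- The phase function `ρ(j,m,x,y,z) = (j+m)(j-m+1)x/2 - jmy + (j+m)z`. -/
noncomputable def rho (j m x y z : ℝ) : ℝ :=
  (j + m) * (j - m + 1) * x / 2 - j * m * y + (j + m) * z

/-- The vector `|jα;ra⟩` of components `(1/√d) q^{ρ(j, k-j, a, r, α)}`, `k = 0,…,d-1`,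
where `j = (d-1)/2` and `q^x = exp(2πix/d)`. -/
noncomputable def mubVec (d : ℕ) (a r α : ℝ) : Fin d → ℂ := fun k =>
  ((1 / Real.sqrt d : ℝ) : ℂ) *
    Complex.exp (2 * (Real.pi : ℂ) * Complex.I *
      ((rho (((d : ℝ) - 1) / 2) ((k : ℝ) - ((d : ℝ) - 1) / 2) a r α : ℝ) / (d : ℂ)))

/-- The overlap `⟨jα;ra | jβ;sb⟩` (standard Hermitian inner product on `ℂ^d`). -/
noncomputable def overlap (d : ℕ) (a r : ℝ) (α : ℝ) (b s : ℝ) (β : ℝ) : ℂ :=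
  ∑ k : Fin d, (starRingEnd ℂ) (mubVec d a r α k) * mubVec d b s β k

/-- Generalized quadratic Gauss sum `S(u,v,w) = ∑_{k=0}^{|w|-1} exp(iπ(uk² + vk)/w)`. -/
noncomputable def gaussS (u v w : ℤ) : ℂ :=
  ∑ k ∈ Finset.range w.natAbs,
    Complex.exp ((Real.pi : ℂ) * Complex.I *
      (((u : ℂ) * (k : ℂ) ^ 2 + (v : ℂ) * (k : ℂ)) / (w : ℂ)))

/-!
Expanding `S * conj S` and substituting `x = y + m` in the double sum (Weyl differencing) turns
it into `∑ₘ Q m ∑_y e(u m y / d)`, where `Q` is the summand of `S`. The parity of `u d + v`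
makes `Q` a function on `ZMod d`, so this substitution is legitimate, and the inner sum of the
primitive character `e(· / d)` vanishes unless `u m ≡ 0`, i.e. `m = 0` since `u` is a unit
mod the prime `d`. Hence `|S|² = d`. The overlap is `S / d`, because the product of the
conjugated component of one vector with the component of the other is a summand of `S`
divided by `d`.
-/

open ComplexConjugate

noncomputable def quadPhase (d : ℕ) (u v n : ℤ) : ℂ :=
  exp (Real.pi * I * ((u * n ^ 2 + v * n : ℤ) : ℂ) / d)

lemma gaussS_natCast (d : ℕ) (u v : ℤ) : gaussS u v d = ∑ k ∈ range d, quadPhase d u v k := by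
  simp only [gaussS, quadPhase, Int.natAbs_natCast]
  refine sum_congr rfl fun k _ => congrArg exp ?_
  push_cast
  ring

lemma quadPhase_periodic {d : ℕ} (hd : d ≠ 0) {u v : ℤ} (huv : Even (u * d + v)) :
    Function.Periodic (quadPhase d u v) d := by
  obtain ⟨e, he⟩ := huv
  intro n
  have hdC : (d : ℂ) ≠ 0 := Nat.cast_ne_zero.mpr hd
  have hsplit : Real.pi * I * ((u * (n + d) ^ 2 + v * (n + d) : ℤ) : ℂ) / d
      = Real.pi * I * ((u * n ^ 2 + v * n : ℤ) : ℂ) / d + (u * n + e : ℤ) * (2 * Real.pi * I) := by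
    have he' : (u : ℂ) * d + v = e + e := by exact_mod_cast he
    field_simp
    push_cast
    linear_combination (d : ℂ) * he'
  rw [quadPhase, quadPhase, hsplit, exp_add, exp_int_mul_two_pi_mul_I, mul_one]

lemma quadPhase_val_intCast {d : ℕ} [NeZero d] {u v : ℤ} (huv : Even (u * d + v)) (n : ℤ) :
    quadPhase d u v ((n : ZMod d).val) = quadPhase d u v n := by
  rw [ZMod.val_intCast, Int.emod_def, mul_comm (d : ℤ)]
  exact (quadPhase_periodic (NeZero.ne d) huv).sub_int_mul_eq _

lemma quadPhase_add_mul_conj (d : ℕ) [NeZero d] (u v n m : ℤ) :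
    quadPhase d u v (n + m) * conj (quadPhase d u v n)
      = quadPhase d u v m * ZMod.stdAddChar ((n * (u * m) : ℤ) : ZMod d) := by
  rw [quadPhase, quadPhase, quadPhase, ZMod.stdAddChar_coe, ← exp_conj, ← exp_add, ← exp_add]
  congr 1
  simp only [map_div₀, map_mul, conj_ofReal, conj_I, map_intCast, map_natCast]
  push_cast
  ring

lemma ZMod.sum_range_natCast {M : Type*} [AddCommMonoid M] (d : ℕ) [NeZero d] (f : ZMod d → M) :
    ∑ k ∈ range d, f k = ∑ x, f x := by
  refine sum_nbij' (fun k => (k : ZMod d)) ZMod.val ?_ ?_ ?_ ?_ ?_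
  · simp
  · simp [ZMod.val_lt]
  · exact fun k hk => ZMod.val_cast_of_lt (mem_range.mp hk)
  · exact fun x _ => ZMod.natCast_zmod_val x
  · exact fun _ _ => rfl

theorem sum_mul_conj_sum_of_add_mul_conj {R : Type*} [CommRing R] [Fintype R] [DecidableEq R]
    {ψ : AddChar R ℂ} (hψ : ψ.IsPrimitive) {c : R} (hc : IsUnit c) {Q : R → ℂ}
    (hQ : ∀ y m, Q (y + m) * conj (Q y) = Q m * ψ (y * (c * m))) :
    (∑ x, Q x) * conj (∑ x, Q x) = Fintype.card R * Q 0 := by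
  calc (∑ x, Q x) * conj (∑ x, Q x)
      = ∑ y, ∑ m, Q (y + m) * conj (Q y) := by
        rw [map_sum, mul_sum]
        refine sum_congr rfl fun y _ => ?_
        rw [sum_mul]
        exact (Equiv.sum_comp (Equiv.addLeft y) fun x => Q x * conj (Q y)).symm
    _ = ∑ m, Q m * ∑ y, ψ (y * (c * m)) := by
        simp_rw [hQ, mul_sum]
        exact sum_comm
    _ = Fintype.card R * Q 0 := by
        simp_rw [AddChar.sum_mulShift _ hψ, hc.mul_right_eq_zero]
        simp [mul_comm]

theorem gaussS_mul_conj {d : ℕ} [NeZero d] {u v : ℤ} (hu : IsUnit (u : ZMod d))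
    (huv : Even (u * d + v)) : gaussS u v d * conj (gaussS u v d) = d := by
  have hsum : gaussS u v d = ∑ x : ZMod d, quadPhase d u v x.val := by
    rw [gaussS_natCast, ← ZMod.sum_range_natCast]
    refine sum_congr rfl fun k _ => ?_
    simpa using (quadPhase_val_intCast huv k).symm
  rw [hsum, sum_mul_conj_sum_of_add_mul_conj (ZMod.isPrimitive_stdAddChar d) hu]
  · simp [quadPhase]
  · intro y m
    have hym : y + m = ((y.val + m.val : ℤ) : ZMod d) := by simp
    rw [hym, quadPhase_val_intCast huv, quadPhase_add_mul_conj]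
    simp

theorem norm_gaussS {d : ℕ} [NeZero d] {u v : ℤ} (hu : IsUnit (u : ZMod d))
    (huv : Even (u * d + v)) : ‖gaussS u v d‖ = Real.sqrt d := by
  have h := gaussS_mul_conj hu huv
  rw [mul_conj', ← ofReal_pow, ← ofReal_natCast, ofReal_inj] at h
  rw [← h, Real.sqrt_sq (norm_nonneg _)]

lemma conj_mubVec_mul_mubVec {d : ℕ} (r : ℝ) (a b α β : ℤ) (k : Fin d) :
    conj (mubVec d a r α k) * mubVec d b r β k
      = quadPhase d (a - b) (-(a - b) * d - 2 * (α - β)) k / d := by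
  have hnorm : ((1 / Real.sqrt d : ℝ) : ℂ) * ((1 / Real.sqrt d : ℝ) : ℂ) = 1 / d := by
    rw [← ofReal_mul, div_mul_div_comm, one_mul, Real.mul_self_sqrt (Nat.cast_nonneg d)]
    simp
  rw [mubVec, mubVec, map_mul, conj_ofReal, mul_mul_mul_comm, hnorm, ← exp_conj, ← exp_add,
    quadPhase, one_div_mul_eq_div]
  congr 2
  simp only [map_mul, map_div₀, conj_I, conj_ofReal, map_ofNat, map_natCast, rho]
  push_cast
  field_simp
  ring

lemma overlap_eq (d : ℕ) (r : ℝ) (a b α β : ℤ) :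
    overlap d a r α b r β = gaussS (a - b) (-(a - b) * d - 2 * (α - β)) d / d := by
  rw [overlap, gaussS_natCast, sum_div, ← Fin.sum_univ_eq_sum_range]
  exact sum_congr rfl fun k _ => conj_mubVec_mul_mubVec r a b α β k

theorem stmt_19_general (d : ℕ) (hd : d.Prime) (r : ℝ) (a b α β : ℕ)
    (ha : a < d) (hb : b < d) (hab : a ≠ b) :
    ‖overlap d a r α b r β‖ = 1 / Real.sqrt d ∧
    ‖gaussS ((a : ℤ) - b) (-(((a : ℤ) - b)) * d - 2 * ((α : ℤ) - β)) d‖ =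
      Real.sqrt d := by
  have := Fact.mk hd
  have hu : IsUnit (((a : ℤ) - b : ℤ) : ZMod d) := by
    rw [isUnit_iff_ne_zero, Int.cast_sub, Int.cast_natCast, Int.cast_natCast, sub_ne_zero,
      Ne, ZMod.natCast_eq_natCast_iff', Nat.mod_eq_of_lt ha, Nat.mod_eq_of_lt hb]
    exact hab
  have huv : Even (((a : ℤ) - b) * d + (-((a : ℤ) - b) * d - 2 * ((α : ℤ) - β))) :=
    ⟨-((α : ℤ) - β), by ring⟩
  have hS := norm_gaussS hu huv
  refine ⟨?_, hS⟩
  have h := overlap_eq d r a b α β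
  push_cast at h
  rw [h, norm_div, hS, norm_natCast, Real.sqrt_div_self']

/-- for `d = 2j+1` prime and `a ≠ b (mod d)`,
`|⟨jα;ra | jβ;rb⟩| = 1/√d`; equivalently `|S(a-b, -(a-b)d - 2(α-β), d)| = √d`. -/
theorem stmt_19 (d : ℕ) (hd : d.Prime) (r : ℝ) (a b α β : ℕ)
    (ha : a < d) (hb : b < d) (hab : a ≠ b) (hα : α < d) (hβ : β < d) :
    ‖overlap d a r α b r β‖ = 1 / Real.sqrt d ∧
    ‖gaussS ((a : ℤ) - b) (-(((a : ℤ) - b)) * d - 2 * ((α : ℤ) - β)) d‖ =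
      Real.sqrt d :=
  stmt_19_general d hd r a b α β ha hb hab
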